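/- arXiv:2003.09911 — 3 statements merged into one kernel-verified Lean document; each statement's English description precedes it below -/
import Mathlib

section
/- Let E be a row-finite directed graph, F_E the free commutative monoid on E⁰, →₁ the relation on F_E given by v →₁ Σ_{e∈s⁻¹(v)} r(e) for every non-sink vertex v, and → the smallest reflexive, transitive and additive relation on F_E containing →₁ (additive means a → b implies a + c → b + c). If x = Σᵢ xᵢ and y = Σⱼ yⱼ are elements of F_E with all xᵢ, yⱼ ∈ E⁰ and x → y, then: (1) for every i there exists j and a path (possibly of length zero) from xᵢ to yⱼ; (2) for every j there exists i and a path (possibly of length zero) from xᵢ to yⱼ. -/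
/-- A directed graph: a set of vertices `V`, a set of edges `Ed`,
and source and range maps. -/
structure DGraph (V : Type) (Ed : Type) where
  s : Ed → V
  r : Ed → V

namespace DGraph

variable {V Ed : Type} (G : DGraph V Ed)

/-- A sink is a vertex emitting no edges. -/
def IsSink (v : V) : Prop := ∀ e : Ed, G.s e ≠ v

/-- A source is a vertex receiving no edges. -/
def IsSource (v : V) : Prop := ∀ e : Ed, G.r e ≠ v

/-- A graph is row-finite if every vertex emits finitely many edges. -/
def RowFinite : Prop := ∀ v : V, {e : Ed | G.s e = v}.Finite

theorem rowFinite_of_finite [Finite Ed] : G.RowFinite := fun _ => Set.toFinite _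

/-- There is an edge from `u` to `w`. -/
def Step (u w : V) : Prop := ∃ e : Ed, G.s e = u ∧ G.r e = w

/-- `u` flows to `w`: `u = w` or there is a path from `u` to `w`. -/
def FlowsTo (u w : V) : Prop := Relation.ReflTransGen G.Step u w

/-- Strongly connected graph. -/
def StronglyConnected : Prop := ∀ u w : V, G.FlowsTo u w

/-- A (finite) path of length `≥ 1`: a nonempty list of consecutive edges. -/
structure GPath (G : DGraph V Ed) where
  edges : List Ed
  ne : edges ≠ []
  chain : edges.Chain' (fun e f => G.r e = G.s f)

namespace GPath

variable {G}

/-- The source of a path. -/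
def src (p : G.GPath) : V := G.s (p.edges.head p.ne)

/-- The range of a path. -/
def tgt (p : G.GPath) : V := G.r (p.edges.getLast p.ne)

/-- The length of a path. -/
def length (p : G.GPath) : ℕ := p.edges.length

/-- The set of vertices of a path (the sources of its edges). -/
def vset (p : G.GPath) : Set V := {v | ∃ e ∈ p.edges, G.s e = v}

/-- A cycle: a closed path with pairwise distinct edges. -/
def IsCycle (p : G.GPath) : Prop := p.src = p.tgt ∧ p.edges.Nodup

/-- The path (cycle) has an exit: an edge `f` with `s f = s eᵢ` but `f ≠ eᵢ`. -/
def HasExit (p : G.GPath) : Prop := ∃ (f e : Ed), e ∈ p.edges ∧ G.s f = G.s e ∧ f ≠ e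

/-- An extreme cycle: a cycle with an exit such that every path leaving it returns to it. -/
def IsExtremeCycle (p : G.GPath) : Prop :=
  p.IsCycle ∧ p.HasExit ∧
    ∀ lam : G.GPath, lam.src ∈ p.vset → ∃ w ∈ p.vset, G.FlowsTo lam.tgt w

end GPath

/-- Lengths of closed paths based at `v`. -/
def closedLens (v : V) : Set ℕ :=
  {n | ∃ p : G.GPath, p.src = v ∧ p.tgt = v ∧ p.length = n}

/-- `d` is the period of `v`: the greatest common divisor of the lengths of closed
paths based at `v`. -/
def IsPeriodOf (d : ℕ) (v : V) : Prop :=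
  (∀ n ∈ G.closedLens v, d ∣ n) ∧ ∀ k : ℕ, (∀ n ∈ G.closedLens v, k ∣ n) → k ∣ d

/-- A line point: no vertex that `v` flows to has a bifurcation or lies on a closed path. -/
def LinePoint (v : V) : Prop :=
  ∀ w : V, G.FlowsTo v w →
    (∀ e f : Ed, G.s e = w → G.s f = w → e = f) ∧
      ¬ ∃ p : G.GPath, p.src = w ∧ p.tgt = w

end DGraph

section MonoidOrder

variable {M : Type} [AddCommMonoid M]

/-- The algebraic preorder on a commutative monoid: `a ≤ b` iff `a + c = b` for some `c`. -/
def MLe (a b : M) : Prop := ∃ c : M, a + c = b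

/-- An order ideal of a commutative monoid. -/
structure IsOrderIdeal (I : Set M) : Prop where
  zero_mem : (0 : M) ∈ I
  add_mem : ∀ {a b : M}, a ∈ I → b ∈ I → a + b ∈ I
  mem_of_le : ∀ {a b : M}, b ∈ I → MLe a b → a ∈ I

/-- The order ideal generated by an element `x`: all `y` with `y ≤ n • x` for some `n`. -/
def orderIdealGen (x : M) : Set M := {y | ∃ n : ℕ, MLe y (n • x)}

/-- A simple order ideal: a nonzero order ideal whose only order sub-ideals are `0` and itself. -/
def IsSimpleOrderIdeal (I : Set M) : Prop :=
  IsOrderIdeal I ∧ I ≠ {0} ∧ ∀ J : Set M, IsOrderIdeal J → J ⊆ I → J = {0} ∨ J = I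

/-- The nonzero elements of `I` form a group under addition. -/
def NonzeroGroup (I : Set M) : Prop :=
  (∀ x ∈ I, ∀ y ∈ I, x ≠ 0 → y ≠ 0 → x + y ≠ 0) ∧
    ∃ e ∈ I, e ≠ (0 : M) ∧ (∀ x ∈ I, x ≠ 0 → e + x = x) ∧
      ∀ x ∈ I, x ≠ 0 → ∃ y ∈ I, y ≠ 0 ∧ x + y = e

/-- The congruence on a commutative monoid associated to an ideal `I`:
`a ≈ b` iff `a + c = b + d` for some `c, d ∈ I`. -/
def idealCon (I : Set M) (h0 : (0 : M) ∈ I)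
    (hadd : ∀ {a b : M}, a ∈ I → b ∈ I → a + b ∈ I) : AddCon M where
  r a b := ∃ c ∈ I, ∃ d ∈ I, a + c = b + d
  iseqv := by
    refine ⟨fun a => ⟨0, h0, 0, h0, rfl⟩, ?_, ?_⟩
    · rintro a b ⟨c, hc, d, hd, h⟩
      exact ⟨d, hd, c, hc, h.symm⟩
    · rintro a b c ⟨x, hx, y, hy, h1⟩ ⟨x', hx', y', hy', h2⟩
      refine ⟨x + x', hadd hx hx', y' + y, hadd hy' hy, ?_⟩
      calc a + (x + x') = (a + x) + x' := (add_assoc _ _ _).symm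
        _ = (b + y) + x' := by rw [h1]
        _ = (b + x') + y := by rw [add_right_comm]
        _ = (c + y') + y := by rw [h2]
        _ = c + (y' + y) := add_assoc _ _ _
  add' := by
    rintro a b a' b' ⟨c, hc, d, hd, h1⟩ ⟨c', hc', d', hd', h2⟩
    refine ⟨c + c', hadd hc hc', d + d', hadd hd hd', ?_⟩
    rw [add_add_add_comm, h1, h2, add_add_add_comm]

end MonoidOrder

namespace DGraph

variable {V Ed : Type} (G : DGraph V Ed)

/-- The defining relations of the talented monoid, as a relation on the free
commutative monoid on `E⁰ × ℤ`. -/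
def talRel (hrf : G.RowFinite) (a b : (V × ℤ) →₀ ℕ) : Prop :=
  ∃ (v : V) (i : ℤ), ¬ G.IsSink v ∧ a = Finsupp.single (v, i) 1 ∧
    b = ∑ e ∈ (hrf v).toFinset, Finsupp.single (G.r e, i + 1) 1

/-- The congruence generated by the defining relations of the talented monoid. -/
noncomputable def talCon (hrf : G.RowFinite) : AddCon ((V × ℤ) →₀ ℕ) := addConGen (G.talRel hrf)

/-- The talented monoid `T_E` of a row-finite graph. -/
noncomputable def Tal (hrf : G.RowFinite) : Type := (G.talCon hrf).Quotient

noncomputable instance (hrf : G.RowFinite) : AddCommMonoid (G.Tal hrf) :=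
  inferInstanceAs (AddCommMonoid (G.talCon hrf).Quotient)

/-- The generator `v(i)` of the talented monoid. -/
noncomputable def gen (hrf : G.RowFinite) (v : V) (i : ℤ) : G.Tal hrf :=
  (G.talCon hrf).mk' (Finsupp.single (v, i) 1)

/-- The action of `n : ℤ` on the talented monoid, determined by `ⁿv(i) = v(i+n)`. -/
noncomputable def shift (hrf : G.RowFinite) (n : ℤ) : G.Tal hrf →+ G.Tal hrf :=
  AddCon.lift _
    ((AddCon.mk' _).comp
      (Finsupp.mapDomain.addMonoidHom (fun p : V × ℤ => (p.1, p.2 + n))))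
    (by
      apply AddCon.addConGen_le.mpr
      rintro a b ⟨v, i, hv, rfl, rfl⟩
      show (G.talCon hrf).mk'
            (Finsupp.mapDomain (fun p : V × ℤ => (p.1, p.2 + n)) (Finsupp.single (v, i) 1)) =
          (G.talCon hrf).mk'
            (Finsupp.mapDomain (fun p : V × ℤ => (p.1, p.2 + n))
              (∑ e ∈ (hrf v).toFinset, Finsupp.single (G.r e, i + 1) 1))
      rw [Finsupp.mapDomain_single, Finsupp.mapDomain_finset_sum]
      simp only [Finsupp.mapDomain_single]
      refine (AddCon.eq (G.talCon hrf)).mpr ?_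
      refine AddConGen.Rel.of _ _ ⟨v, i + n, hv, rfl, ?_⟩
      exact Finset.sum_congr rfl fun e _ => by rw [add_right_comm])

end DGraph


namespace DGraph

variable {V Ed : Type} (G : DGraph V Ed)

/-- A ℤ-order ideal of the talented monoid: an order ideal closed under the ℤ-action. -/
def IsZOrderIdeal (hrf : G.RowFinite) (I : Set (G.Tal hrf)) : Prop :=
  IsOrderIdeal I ∧ ∀ (n : ℤ) (x : G.Tal hrf), x ∈ I → G.shift hrf n x ∈ I

/-- The ℤ-order ideal generated by a set `S`. -/
def zIdealGen (hrf : G.RowFinite) (S : Set (G.Tal hrf)) : Set (G.Tal hrf) :=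
  ⋂₀ {I : Set (G.Tal hrf) | G.IsZOrderIdeal hrf I ∧ S ⊆ I}

/-- A simple ℤ-order ideal: a nonzero ℤ-order ideal whose only ℤ-order sub-ideals
are `0` and itself. -/
def IsSimpleZIdeal (hrf : G.RowFinite) (I : Set (G.Tal hrf)) : Prop :=
  G.IsZOrderIdeal hrf I ∧ I ≠ {0} ∧
    ∀ J : Set (G.Tal hrf), G.IsZOrderIdeal hrf J → J ⊆ I → J = {0} ∨ J = I

/-- The adjacency matrix of a graph: the `(u, w)` entry is the number of edges
from `u` to `w`. -/
noncomputable def adj : Matrix V V ℕ := Matrix.of fun u w => Nat.card {e : Ed // G.s e = u ∧ G.r e = w}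

/-- The defining relations of the graph monoid `M_E`, as a relation on the free
commutative monoid on `E⁰`. -/
def gmRel (hrf : G.RowFinite) (a b : V →₀ ℕ) : Prop :=
  ∃ v : V, ¬ G.IsSink v ∧ a = Finsupp.single v 1 ∧
    b = ∑ e ∈ (hrf v).toFinset, Finsupp.single (G.r e) 1

/-- The graph monoid `M_E` of a row-finite graph. -/
noncomputable def GM (hrf : G.RowFinite) : Type := (addConGen (G.gmRel hrf)).Quotient

noncomputable instance (hrf : G.RowFinite) : AddCommMonoid (G.GM hrf) :=
  inferInstanceAs (AddCommMonoid (addConGen (G.gmRel hrf)).Quotient)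

/-- The smallest reflexive, transitive and additive relation on the free commutative
monoid on `E⁰` containing the defining relations of the graph monoid. -/
inductive FlowRel (hrf : G.RowFinite) : (V →₀ ℕ) → (V →₀ ℕ) → Prop
  | of {a b : V →₀ ℕ} : G.gmRel hrf a b → FlowRel hrf a b
  | refl (a : V →₀ ℕ) : FlowRel hrf a a
  | trans {a b c : V →₀ ℕ} : FlowRel hrf a b → FlowRel hrf b c → FlowRel hrf a c
  | add_right {a b : V →₀ ℕ} (c : V →₀ ℕ) : FlowRel hrf a b → FlowRel hrf (a + c) (b + c)

/-- The quotient of the talented monoid by a ℤ-order ideal. -/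
noncomputable def TalQuot (hrf : G.RowFinite) (I : Set (G.Tal hrf))
    (hI : G.IsZOrderIdeal hrf I) : Type :=
  (idealCon I hI.1.zero_mem (fun ha hb => hI.1.add_mem ha hb)).Quotient

noncomputable instance (hrf : G.RowFinite) (I : Set (G.Tal hrf))
    (hI : G.IsZOrderIdeal hrf I) : AddCommMonoid (G.TalQuot hrf I hI) :=
  inferInstanceAs
    (AddCommMonoid (idealCon I hI.1.zero_mem (fun ha hb => hI.1.add_mem ha hb)).Quotient)

/-- The ℤ-action descends to the quotient of the talented monoid by a ℤ-order ideal. -/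
noncomputable def qshift (hrf : G.RowFinite) (I : Set (G.Tal hrf))
    (hI : G.IsZOrderIdeal hrf I) (n : ℤ) : G.TalQuot hrf I hI →+ G.TalQuot hrf I hI :=
  AddCon.lift _
    ((AddCon.mk' (idealCon I hI.1.zero_mem (fun ha hb => hI.1.add_mem ha hb))).comp
      (G.shift hrf n))
    (by
      rintro a b ⟨c, hc, d, hd, h⟩
      show AddCon.ker _ _ _
      show (AddCon.mk' _) (G.shift hrf n a) = (AddCon.mk' _) (G.shift hrf n b)
      refine (AddCon.eq _).mpr ?_
      exact ⟨G.shift hrf n c, hI.2 n c hc, G.shift hrf n d, hI.2 n d hd, by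
        rw [← map_add, ← map_add, h]⟩)

end DGraph

/-- If `x → y` in the free commutative monoid on the vertices (where `→`
is the smallest reflexive, transitive, additive relation containing the defining relations
of the graph monoid), then every vertex appearing in `x` flows (via a possibly trivial
path) to some vertex appearing in `y`, and every vertex appearing in `y` is flowed into
from some vertex appearing in `x`. -/
theorem statement0 {V Ed : Type} (G : DGraph V Ed) (hrf : G.RowFinite)
    (x y : V →₀ ℕ) (h : G.FlowRel hrf x y) :
    (∀ u ∈ x.support, ∃ w ∈ y.support, G.FlowsTo u w) ∧
      (∀ w ∈ y.support, ∃ u ∈ x.support, G.FlowsTo u w) := by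
  induction h with
  | of hab =>
    obtain ⟨v, hv, rfl, rfl⟩ := hab
    have hvex : ∃ e : Ed, G.s e = v := by
      by_contra hc
      exact hv (fun e he => hc ⟨e, he⟩)
    obtain ⟨e0, he0⟩ := hvex
    have hmem : ∀ e ∈ (hrf v).toFinset,
        G.r e ∈ (∑ e' ∈ (hrf v).toFinset, Finsupp.single (G.r e') 1).support := by
      intro e he
      rw [Finsupp.mem_support_iff]
      intro hz
      have hle : Finsupp.single (G.r e) 1 (G.r e) ≤
          (∑ e' ∈ (hrf v).toFinset, Finsupp.single (G.r e') 1) (G.r e) := by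
        rw [Finsupp.finset_sum_apply]
        exact Finset.single_le_sum
          (f := fun e' => (Finsupp.single (G.r e') 1 : V →₀ ℕ) (G.r e))
          (fun _ _ => Nat.zero_le _) he
      rw [hz] at hle
      simp at hle
    have hsup : ∀ w ∈ (∑ e' ∈ (hrf v).toFinset, Finsupp.single (G.r e') 1).support,
        ∃ e ∈ (hrf v).toFinset, G.r e = w := by
      intro w hw
      obtain ⟨e, he, hwe⟩ := Finsupp.mem_support_finset_sum w hw
      refine ⟨e, he, ?_⟩
      have := Finsupp.support_single_subset hwe
      rw [Finset.mem_singleton] at this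
      exact this.symm
    constructor
    · intro u hu
      rw [Finsupp.support_single_ne_zero _ one_ne_zero, Finset.mem_singleton] at hu
      subst hu
      refine ⟨G.r e0, hmem e0 (by simpa using he0), ?_⟩
      exact Relation.ReflTransGen.single ⟨e0, he0, rfl⟩
    · intro w hw
      obtain ⟨e, he, rfl⟩ := hsup w hw
      refine ⟨v, by simp [Finsupp.support_single_ne_zero _ one_ne_zero], ?_⟩
      rw [Set.Finite.mem_toFinset] at he
      exact Relation.ReflTransGen.single ⟨e, he, rfl⟩
  | refl a => exact ⟨fun u hu => ⟨u, hu, Relation.ReflTransGen.refl⟩,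
      fun w hw => ⟨w, hw, Relation.ReflTransGen.refl⟩⟩
  | trans h1 h2 ih1 ih2 =>
    refine ⟨fun u hu => ?_, fun w hw => ?_⟩
    · obtain ⟨m, hm, h1'⟩ := ih1.1 u hu
      obtain ⟨w, hw, h2'⟩ := ih2.1 m hm
      exact ⟨w, hw, h1'.trans h2'⟩
    · obtain ⟨m, hm, h2'⟩ := ih2.2 w hw
      obtain ⟨u, hu, h1'⟩ := ih1.2 m hm
      exact ⟨u, hu, h1'.trans h2'⟩
  | add_right c h ih =>
    have hadd : ∀ (f g : V →₀ ℕ) (u : V), u ∈ (f + g).support ↔ u ∈ f.support ∨ u ∈ g.support := by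
      intro f g u
      simp only [Finsupp.mem_support_iff, Finsupp.add_apply, Nat.add_eq_zero, not_and_or]
      omega
    refine ⟨fun u hu => ?_, fun w hw => ?_⟩
    · rcases (hadd _ _ u).mp hu with h' | h'
      · obtain ⟨w, hw, hf⟩ := ih.1 u h'
        exact ⟨w, (hadd _ _ w).mpr (Or.inl hw), hf⟩
      · exact ⟨u, (hadd _ _ u).mpr (Or.inr h'), Relation.ReflTransGen.refl⟩
    · rcases (hadd _ _ w).mp hw with h' | h'
      · obtain ⟨u, hu, hf⟩ := ih.2 w h'
        exact ⟨u, (hadd _ _ u).mpr (Or.inl hu), hf⟩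
      · exact ⟨w, (hadd _ _ w).mpr (Or.inr h'), Relation.ReflTransGen.refl⟩
end

section
/- Let E and F be essential finite directed graphs (finite graphs with no sinks and no sources). If the adjacency matrices A_E and A_F are strongly shift equivalent, then T_E is ℤ-monoid isomorphic to T_F. -/
/-- Two square nonnegative-integer matrices are elementary shift equivalent if `A = RS`
and `B = SR` for some nonnegative-integer matrices `R, S`. -/
def ElemSE {m n : Type} [Fintype m] [Fintype n]
    (A : Matrix m m ℕ) (B : Matrix n n ℕ) : Prop :=
  ∃ (R : Matrix m n ℕ) (S : Matrix n m ℕ), A = R * S ∧ B = S * R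

/-- Strong shift equivalence: a finite chain of elementary shift equivalences. -/
inductive SSE : ∀ (m : Type) [Fintype m] (n : Type) [Fintype n],
    Matrix m m ℕ → Matrix n n ℕ → Prop
  | of {m : Type} [Fintype m] {n : Type} [Fintype n]
      {A : Matrix m m ℕ} {B : Matrix n n ℕ} : ElemSE A B → SSE m n A B
  | trans {m : Type} [Fintype m] {n : Type} [Fintype n] {p : Type} [Fintype p]
      {A : Matrix m m ℕ} {B : Matrix n n ℕ} {C : Matrix p p ℕ} :
      SSE m n A B → SSE n p B C → SSE m p A C

section MTside

/-- Lift of a map on generators to the free commutative monoid. -/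
noncomputable def freeLift {α N : Type} [AddCommMonoid N] (g : α → N) : (α →₀ ℕ) →+ N :=
  Finsupp.liftAddHom (fun a => multiplesHom N (g a))

@[simp] lemma freeLift_single {α N : Type} [AddCommMonoid N] (g : α → N) (a : α) (n : ℕ) :
    freeLift g (Finsupp.single a n) = n • g a :=
  Finsupp.liftAddHom_apply_single _ _ _

variable {V W : Type} [Fintype V] [Fintype W]

/-- The defining relations of the talented monoid of a matrix. -/
def mRel (A : Matrix V V ℕ) (a b : (V × ℤ) →₀ ℕ) : Prop :=
  ∃ (v : V) (i : ℤ), a = Finsupp.single (v, i) 1 ∧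
    b = ∑ u : V, A v u • Finsupp.single (u, i + 1) (1 : ℕ)

/-- The talented monoid of a matrix. -/
def MT (A : Matrix V V ℕ) : Type := (addConGen (mRel A)).Quotient

noncomputable instance (A : Matrix V V ℕ) : AddCommMonoid (MT A) :=
  inferInstanceAs (AddCommMonoid (addConGen (mRel A)).Quotient)

noncomputable def mgen (A : Matrix V V ℕ) (v : V) (i : ℤ) : MT A :=
  (addConGen (mRel A)).mk' (Finsupp.single (v, i) 1)

lemma mgen_rel (A : Matrix V V ℕ) (v : V) (i : ℤ) :
    mgen A v i = ∑ u : V, A v u • mgen A u (i + 1) := by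
  have h : (addConGen (mRel A)) (Finsupp.single (v, i) 1)
      (∑ u : V, A v u • Finsupp.single (u, i + 1) (1 : ℕ)) :=
    AddConGen.Rel.of _ _ ⟨v, i, rfl, rfl⟩
  have h2 : (addConGen (mRel A)).mk' (Finsupp.single (v, i) 1)
      = (addConGen (mRel A)).mk' (∑ u : V, A v u • Finsupp.single (u, i + 1) (1 : ℕ)) :=
    (AddCon.eq _).mpr h
  rw [mgen, h2, map_sum]
  refine Finset.sum_congr rfl fun u _ => ?_
  rw [map_nsmul]
  rfl

lemma mix_mul {U N : Type} [Fintype U] [AddCommMonoid N] (M₁ : Matrix V W ℕ)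
    (M₂ : Matrix W U ℕ) (g : U → N) (v : V) :
    ∑ w : W, M₁ v w • ∑ u : U, M₂ w u • g u = ∑ u : U, (M₁ * M₂) v u • g u := by
  simp only [Finset.smul_sum, smul_smul, Matrix.mul_apply, Finset.sum_smul]
  exact Finset.sum_comm

/-- The monoid homomorphism induced by `R` with `R * B = A * R`. -/
noncomputable def mtHom {A : Matrix V V ℕ} {B : Matrix W W ℕ} (R : Matrix V W ℕ)
    (hRB : R * B = A * R) : MT A →+ MT B :=
  AddCon.lift _ (freeLift (fun p : V × ℤ => ∑ w : W, R p.1 w • mgen B w p.2)) (by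
    apply AddCon.addConGen_le.mpr
    rintro a b ⟨v, i, rfl, rfl⟩
    rw [AddCon.ker_rel, map_sum]
    simp only [map_nsmul, freeLift_single, one_smul]
    calc ∑ w : W, R v w • mgen B w i
        = ∑ w : W, R v w • ∑ u : W, B w u • mgen B u (i + 1) :=
          Finset.sum_congr rfl fun w _ => by rw [← mgen_rel]
      _ = ∑ u : W, (R * B) v u • mgen B u (i + 1) := mix_mul _ _ _ _
      _ = ∑ u : W, (A * R) v u • mgen B u (i + 1) := by rw [hRB]
      _ = ∑ u : V, A v u • ∑ w : W, R u w • mgen B w (i + 1) := (mix_mul _ _ _ _).symm)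

lemma mtHom_mgen {A : Matrix V V ℕ} {B : Matrix W W ℕ} (R : Matrix V W ℕ)
    (hRB : R * B = A * R) (v : V) (i : ℤ) :
    mtHom R hRB (mgen A v i) = ∑ w : W, R v w • mgen B w i := by
  show freeLift (fun p : V × ℤ => ∑ w : W, R p.1 w • mgen B w p.2)
      (Finsupp.single (v, i) 1) = _
  rw [freeLift_single, one_smul]

lemma mtHom_ext {A : Matrix V V ℕ} {N : Type} [AddCommMonoid N] {f g : MT A →+ N}
    (h : ∀ v i, f (mgen A v i) = g (mgen A v i)) : f = g := by
  ext x
  obtain ⟨y, rfl⟩ := AddCon.mk'_surjective x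
  induction y using Finsupp.induction with
  | zero => exact (map_zero f).trans (map_zero g).symm
  | single_add a n fy _ _ ih =>
    obtain ⟨v, i⟩ := a
    have hsingle : Finsupp.single ((v, i) : V × ℤ) n = n • Finsupp.single (v, i) (1 : ℕ) := by
      rw [Finsupp.smul_single, smul_eq_mul, mul_one]
    rw [hsingle]
    simp only [map_add, map_nsmul]
    have key : f (n • mgen A v i + (show MT A from (addConGen (mRel A)).mk' fy))
        = g (n • mgen A v i + (show MT A from (addConGen (mRel A)).mk' fy)) := by
      rw [map_add, map_add, map_nsmul, map_nsmul, h]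
      exact congrArg _ ih
    exact key

/-- The ℤ-action on the talented monoid of a matrix. -/
noncomputable def mshift (A : Matrix V V ℕ) (n : ℤ) : MT A →+ MT A :=
  AddCon.lift _
    ((AddCon.mk' _).comp
      (Finsupp.mapDomain.addMonoidHom (fun p : V × ℤ => (p.1, p.2 + n)))) (by
    apply AddCon.addConGen_le.mpr
    rintro a b ⟨v, i, rfl, rfl⟩
    show (addConGen (mRel A)).mk'
        (Finsupp.mapDomain (fun p : V × ℤ => (p.1, p.2 + n)) (Finsupp.single (v, i) 1)) =
      (addConGen (mRel A)).mk'
        (Finsupp.mapDomain (fun p : V × ℤ => (p.1, p.2 + n))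
          (∑ u : V, A v u • Finsupp.single (u, i + 1) (1 : ℕ)))
    have h1 : ∀ j : ℤ, (∑ u : V, A v u • Finsupp.single (u, j) (1 : ℕ))
        = ∑ u : V, Finsupp.single (u, j) (A v u) := by
      intro j
      refine Finset.sum_congr rfl fun u _ => ?_
      rw [Finsupp.smul_single, smul_eq_mul, mul_one]
    rw [Finsupp.mapDomain_single, h1, Finsupp.mapDomain_finset_sum]
    simp only [Finsupp.mapDomain_single]
    refine (AddCon.eq _).mpr ?_
    refine AddConGen.Rel.of _ _ ⟨v, i + n, rfl, ?_⟩
    rw [h1]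
    exact Finset.sum_congr rfl fun u _ => by rw [add_right_comm])

lemma mshift_mgen (A : Matrix V V ℕ) (n : ℤ) (v : V) (i : ℤ) :
    mshift A n (mgen A v i) = mgen A v (i + n) := by
  show (addConGen (mRel A)).mk'
      (Finsupp.mapDomain (fun p : V × ℤ => (p.1, p.2 + n)) (Finsupp.single (v, i) 1)) = _
  rw [Finsupp.mapDomain_single]
  rfl

lemma mtHom_shift {A : Matrix V V ℕ} {B : Matrix W W ℕ} (R : Matrix V W ℕ)
    (hRB : R * B = A * R) (n : ℤ) (x : MT A) :
    mtHom R hRB (mshift A n x) = mshift B n (mtHom R hRB x) := by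
  have h : (mtHom R hRB).comp (mshift A n) = (mshift B n).comp (mtHom R hRB) := by
    apply mtHom_ext
    intro v i
    simp only [AddMonoidHom.comp_apply, mshift_mgen, mtHom_mgen, map_sum, map_nsmul,
      mshift_mgen]
  exact DFunLike.congr_fun h x

/-- Existence of a ℤ-equivariant isomorphism of matrix talented monoids. -/
def MTIso (A : Matrix V V ℕ) (B : Matrix W W ℕ) : Prop :=
  ∃ φ : MT A ≃+ MT B, ∀ (n : ℤ) (x : MT A), φ (mshift A n x) = mshift B n (φ x)

lemma MTIso.trans {U : Type} [Fintype U] {A : Matrix V V ℕ} {B : Matrix W W ℕ}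
    {C : Matrix U U ℕ} (h1 : MTIso A B) (h2 : MTIso B C) : MTIso A C := by
  obtain ⟨φ, hφ⟩ := h1
  obtain ⟨ψ, hψ⟩ := h2
  exact ⟨φ.trans ψ, fun n x => by simp [AddEquiv.trans_apply, hφ, hψ]⟩

lemma elemSE_mtIso {A : Matrix V V ℕ} {B : Matrix W W ℕ} (h : ElemSE A B) : MTIso A B := by
  obtain ⟨R, S, hA, hB⟩ := h
  have hRB : R * B = A * R := by rw [hA, hB, Matrix.mul_assoc]
  have hSA : S * A = B * S := by rw [hA, hB, Matrix.mul_assoc]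
  set f : MT A →+ MT B := mtHom R hRB with hf
  set g : MT B →+ MT A := (mshift A 1).comp (mtHom S hSA) with hg
  have hgf : g.comp f = AddMonoidHom.id (MT A) := by
    apply mtHom_ext
    intro v i
    rw [AddMonoidHom.comp_apply, AddMonoidHom.id_apply, hf, hg, mtHom_mgen,
      AddMonoidHom.comp_apply, map_sum]
    simp only [map_nsmul, mtHom_mgen, map_sum, mshift_mgen]
    rw [mix_mul, ← hA, ← mgen_rel]
  have hfg : f.comp g = AddMonoidHom.id (MT B) := by
    apply mtHom_ext
    intro v i
    rw [AddMonoidHom.comp_apply, AddMonoidHom.id_apply, hg, hf,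
      AddMonoidHom.comp_apply, mtHom_mgen, map_sum]
    simp only [map_nsmul, mshift_mgen, mtHom_mgen, map_sum]
    rw [mix_mul, ← hB, ← mgen_rel]
  refine ⟨AddMonoidHom.toAddEquiv f g hgf hfg, fun n x => ?_⟩
  exact mtHom_shift R hRB n x

lemma sse_mtIso {A : Matrix V V ℕ} {B : Matrix W W ℕ} (h : SSE V W A B) : MTIso A B := by
  induction h with
  | of h => exact elemSE_mtIso h
  | trans _ _ ih1 ih2 => exact ih1.trans ih2

end MTside

section GraphSide

variable {V Ed : Type} [Fintype V] [Fintype Ed]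

lemma graph_sum_eq (G : DGraph V Ed) (v : V) (i : ℤ) :
    ∑ e ∈ (G.rowFinite_of_finite v).toFinset, Finsupp.single (G.r e, i + 1) (1 : ℕ)
      = ∑ u : V, G.adj v u • Finsupp.single (u, i + 1) (1 : ℕ) := by
  classical
  rw [← Finset.sum_fiberwise (G.rowFinite_of_finite v).toFinset (fun e => G.r e)
    (fun e => Finsupp.single (G.r e, i + 1) (1 : ℕ))]
  refine Finset.sum_congr rfl fun u _ => ?_
  rw [Finset.sum_congr rfl (fun e he => by
    rw [(Finset.mem_filter.mp he).2] :
      ∀ e ∈ Finset.filter (fun e => G.r e = u) (G.rowFinite_of_finite v).toFinset,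
        Finsupp.single (G.r e, i + 1) (1 : ℕ) = Finsupp.single (u, i + 1) 1),
    Finset.sum_const]
  congr 1
  rw [DGraph.adj, Matrix.of_apply, Nat.card_eq_fintype_card, Fintype.card_subtype]
  congr 1
  ext e
  simp [Set.Finite.mem_toFinset]

lemma talRel_eq_mRel (G : DGraph V Ed) (hG : ∀ v, ¬ G.IsSink v) :
    G.talRel G.rowFinite_of_finite = mRel G.adj := by
  funext a b
  apply propext
  constructor
  · rintro ⟨v, i, _, rfl, rfl⟩
    exact ⟨v, i, rfl, graph_sum_eq G v i⟩
  · rintro ⟨v, i, rfl, rfl⟩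
    exact ⟨v, i, hG v, rfl, (graph_sum_eq G v i).symm⟩

lemma talCon_eq (G : DGraph V Ed) (hG : ∀ v, ¬ G.IsSink v) :
    G.talCon G.rowFinite_of_finite = addConGen (mRel G.adj) := by
  rw [DGraph.talCon, talRel_eq_mRel G hG]

/-- The talented monoid of a graph is the talented monoid of its adjacency matrix. -/
noncomputable def talToMT (G : DGraph V Ed) (hG : ∀ v, ¬ G.IsSink v) :
    G.Tal G.rowFinite_of_finite ≃+ MT G.adj :=
  AddCon.congr (AddEquiv.refl _)
    (by rw [talCon_eq G hG]; exact AddCon.ext fun _ _ => Iff.rfl)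

lemma talToMT_shift (G : DGraph V Ed) (hG : ∀ v, ¬ G.IsSink v) (n : ℤ)
    (x : G.Tal G.rowFinite_of_finite) :
    talToMT G hG (G.shift G.rowFinite_of_finite n x) = mshift G.adj n (talToMT G hG x) := by
  obtain ⟨y, rfl⟩ := AddCon.mk'_surjective (c := G.talCon G.rowFinite_of_finite) x
  rfl

end GraphSide


/-- For essential finite graphs (no sinks and no sources), strong shift
equivalence of the adjacency matrices implies that the talented monoids are ℤ-monoid
isomorphic. -/
theorem statement4 {V₁ E₁ V₂ E₂ : Type} [Fintype V₁] [Fintype E₁] [Fintype V₂] [Fintype E₂]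
    (G : DGraph V₁ E₁) (H : DGraph V₂ E₂)
    (hG₁ : ∀ v, ¬ G.IsSink v) (hG₂ : ∀ v, ¬ G.IsSource v)
    (hH₁ : ∀ v, ¬ H.IsSink v) (hH₂ : ∀ v, ¬ H.IsSource v)
    (hsse : SSE V₁ V₂ G.adj H.adj) :
    ∃ φ : G.Tal G.rowFinite_of_finite ≃+ H.Tal H.rowFinite_of_finite,
      ∀ (n : ℤ) (x : G.Tal G.rowFinite_of_finite),
        φ (G.shift G.rowFinite_of_finite n x) = H.shift H.rowFinite_of_finite n (φ x) := by
  obtain ⟨ψ, hψ⟩ := sse_mtIso hsse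
  have symm_shift : ∀ (n : ℤ) (y : MT H.adj),
      (talToMT H hH₁).symm (mshift H.adj n y)
        = H.shift H.rowFinite_of_finite n ((talToMT H hH₁).symm y) := by
    intro n y
    apply (talToMT H hH₁).injective
    rw [AddEquiv.apply_symm_apply, talToMT_shift, AddEquiv.apply_symm_apply]
  refine ⟨((talToMT G hG₁).trans ψ).trans (talToMT H hH₁).symm, fun n x => ?_⟩
  simp only [AddEquiv.trans_apply]
  rw [talToMT_shift, hψ, symm_shift]
end

section
/- Let E be a finite strongly connected directed graph with at least one edge, let v ∈ E⁰, and let d ≥ 1 be the period of v. Then in the talented monoid T_E: (1) for all 0 < i < d, [v] ∩ ⁱ[v] = {0}; (2) [v] = ᵈ[v]; (3) [v] is a simple order ideal of T_E. Here ⁱ[v] = [v(i)]. -/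
namespace DGraph

variable {V Ed : Type} (G : DGraph V Ed)

/-- Reachability in exactly `n` steps. -/
def ReachLen : ℕ → V → V → Prop
  | 0, u, w => u = w
  | (n+1), u, w => ∃ e, G.s e = u ∧ ReachLen n (G.r e) w

variable {G}

theorem ReachLen.trans : ∀ {m n : ℕ} {u w x : V},
    G.ReachLen m u w → G.ReachLen n w x → G.ReachLen (m + n) u x := by
  intro m
  induction m with
  | zero => intro n u w x h1 h2; cases h1; simpa [Nat.zero_add] using h2
  | succ m ih =>
    rintro n u w x ⟨e, he, h1⟩ h2
    have hmn : m + 1 + n = m + n + 1 := by omega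
    rw [hmn]
    exact ⟨e, he, ih h1 h2⟩

theorem flowsTo_reachLen {u w : V} (h : G.FlowsTo u w) : ∃ n, G.ReachLen n u w := by
  induction h with
  | refl => exact ⟨0, rfl⟩
  | tail _ hbc ih =>
    obtain ⟨n, hn⟩ := ih
    obtain ⟨e, he, hre⟩ := hbc
    exact ⟨n + 1, ReachLen.trans hn ⟨e, he, hre⟩⟩

theorem list_reach : ∀ (l : List Ed) (hne : l ≠ [])
    (_ : l.Chain' (fun e f => G.r e = G.s f)),
    G.ReachLen l.length (G.s (l.head hne)) (G.r (l.getLast hne)) := by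
  intro l
  induction l with
  | nil => intro h; exact absurd rfl h
  | cons e t ih =>
    intro hne hc
    cases t with
    | nil => exact ⟨e, rfl, rfl⟩
    | cons f t' =>
      obtain ⟨hef, hc'⟩ := List.isChain_cons_cons.mp hc
      have H := ih (by simp) hc'
      refine ⟨e, rfl, ?_⟩
      have hg : (e :: f :: t').getLast hne = (f :: t').getLast (by simp) :=
        List.getLast_cons (by simp)
      rw [hg]
      simpa [hef, List.length_cons, List.head] using H

theorem gpath_reach (p : G.GPath) : G.ReachLen p.length p.src p.tgt :=
  list_reach p.edges p.ne p.chain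

theorem reach_gpath : ∀ {n : ℕ} {u w : V}, n ≠ 0 → G.ReachLen n u w →
    ∃ p : G.GPath, p.src = u ∧ p.tgt = w ∧ p.length = n := by
  intro n
  induction n with
  | zero => intro u w h; exact absurd rfl h
  | succ n ih =>
    rintro u w - ⟨e, he, h⟩
    cases n with
    | zero =>
      cases h
      exact ⟨⟨[e], by simp, List.isChain_singleton e⟩, he, rfl, rfl⟩
    | succ n =>
      obtain ⟨p, hsrc, htgt, hlen⟩ := ih (Nat.succ_ne_zero n) h
      have hne : p.edges ≠ [] := p.ne
      refine ⟨⟨e :: p.edges, by simp, ?_⟩, ?_, ?_, ?_⟩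
      · refine List.isChain_cons.mpr ⟨?_, p.chain⟩
        intro y hy
        have hy' : y = p.edges.head hne := by
          rwa [List.head?_eq_head hne, Option.mem_some_iff, eq_comm] at hy
        subst hy'
        simp only [GPath.src] at hsrc
        exact hsrc.symm
      · simpa [GPath.src] using he
      · simp only [GPath.tgt] at htgt ⊢
        rwa [List.getLast_cons hne]
      · simp [GPath.length, List.length_cons, GPath.length] at hlen ⊢
        omega

theorem mem_closedLens_iff {n : ℕ} {v : V} :
    n ∈ G.closedLens v ↔ n ≠ 0 ∧ G.ReachLen n v v := by
  constructor
  · rintro ⟨p, h1, h2, h3⟩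
    refine ⟨?_, ?_⟩
    · rw [← h3]; simpa [GPath.length] using p.ne
    · have := gpath_reach p; rwa [h1, h2, h3] at this
  · rintro ⟨h0, h⟩
    obtain ⟨p, h1, h2, h3⟩ := reach_gpath h0 h
    exact ⟨p, h1, h2, h3⟩

end DGraph


section MLeLemmas

variable {M N : Type} [AddCommMonoid M] [AddCommMonoid N]

theorem MLe.rfl {a : M} : MLe a a := ⟨0, add_zero a⟩

theorem MLe.zero_le (a : M) : MLe 0 a := ⟨a, zero_add a⟩

theorem MLe.trans {a b c : M} (h1 : MLe a b) (h2 : MLe b c) : MLe a c := by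
  obtain ⟨x, hx⟩ := h1; obtain ⟨y, hy⟩ := h2
  exact ⟨x + y, by rw [← add_assoc, hx, hy]⟩

theorem MLe.add {a b c e : M} (h1 : MLe a b) (h2 : MLe c e) : MLe (a + c) (b + e) := by
  obtain ⟨x, hx⟩ := h1; obtain ⟨y, hy⟩ := h2
  exact ⟨x + y, by rw [← hx, ← hy]; abel⟩

theorem MLe.nsmul {a b : M} (n : ℕ) (h : MLe a b) : MLe (n • a) (n • b) := by
  obtain ⟨x, hx⟩ := h
  exact ⟨n • x, by rw [← smul_add, hx]⟩

theorem MLe.map {a b : M} (f : M →+ N) (h : MLe a b) : MLe (f a) (f b) := by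
  obtain ⟨x, hx⟩ := h
  exact ⟨f x, by rw [← map_add, hx]⟩

theorem MLe.sum {ι : Type} (s : Finset ι) (f g : ι → M) (h : ∀ i ∈ s, MLe (f i) (g i)) :
    MLe (∑ i ∈ s, f i) (∑ i ∈ s, g i) := by
  classical
  induction s using Finset.induction with
  | empty => exact MLe.rfl
  | insert _ _ hx ih =>
    rw [Finset.sum_insert hx, Finset.sum_insert hx]
    exact MLe.add (h _ (Finset.mem_insert_self _ _))
      (ih fun i hi => h i (Finset.mem_insert_of_mem hi))

theorem isOrderIdeal_orderIdealGen (x : M) : IsOrderIdeal (orderIdealGen x) := by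
  constructor
  · exact ⟨0, MLe.zero_le _⟩
  · rintro a b ⟨n, hn⟩ ⟨m, hm⟩
    exact ⟨n + m, by rw [add_nsmul]; exact MLe.add hn hm⟩
  · rintro a b ⟨n, hn⟩ hab
    exact ⟨n, hab.trans hn⟩

theorem IsOrderIdeal.nsmul_mem {I : Set M} (hI : IsOrderIdeal I) {x : M} (hx : x ∈ I)
    (n : ℕ) : n • x ∈ I := by
  induction n with
  | zero => simpa using hI.zero_mem
  | succ n ih => rw [succ_nsmul]; exact hI.add_mem ih hx

end MLeLemmas

section NumericalSemigroup

theorem Sgp.mul_mem {S : Set ℕ} (hadd : ∀ {p q : ℕ}, p ∈ S → q ∈ S → p + q ∈ S)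
    {s : ℕ} (hs : s ∈ S) : ∀ {m : ℕ}, 1 ≤ m → m * s ∈ S := by
  intro m
  induction m with
  | zero => omega
  | succ m ih =>
    intro _
    rcases Nat.eq_zero_or_pos m with h | h
    · subst h; simpa using hs
    · have := hadd (ih h) hs
      simpa [Nat.succ_mul] using this

theorem numerical_semigroup (S : Set ℕ) (hadd : ∀ {p q : ℕ}, p ∈ S → q ∈ S → p + q ∈ S)
    (d : ℕ) (hd : 1 ≤ d) (hdvd : ∀ n ∈ S, d ∣ n)
    (hgcd : ∀ k : ℕ, (∀ n ∈ S, k ∣ n) → k ∣ d) :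
    ∃ K : ℕ, 1 ≤ K ∧ ∀ k : ℕ, K ≤ k → k * d ∈ S := by
  classical
  set H : AddSubgroup ℤ := AddSubgroup.closure ((fun n : ℕ => (n : ℤ)) '' S) with hH
  obtain ⟨g, hg⟩ := Int.subgroup_cyclic H
  -- every element of H is divisible by d
  have hHd : ∀ x ∈ H, (d : ℤ) ∣ x := by
    intro x hx
    induction hx using AddSubgroup.closure_induction with
    | mem y hy =>
      obtain ⟨n, hn, rfl⟩ := hy
      simpa using Int.natCast_dvd_natCast.mpr (hdvd n hn)
    | zero => exact dvd_zero _
    | add a b _ _ ha hb => exact dvd_add ha hb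
    | neg a _ ha => exact (dvd_neg).mpr ha
  have hgH : g ∈ H := by
    rw [hg]; exact AddSubgroup.subset_closure (Set.mem_singleton g)
  have hdg : (d : ℤ) ∣ g := hHd g hgH
  have hgS : ∀ n ∈ S, g ∣ (n : ℤ) := by
    intro n hn
    have : (n : ℤ) ∈ H := AddSubgroup.subset_closure ⟨n, hn, rfl⟩
    rw [hg, AddSubgroup.mem_closure_singleton] at this
    obtain ⟨k, hk⟩ := this
    exact ⟨k, by rw [← hk, zsmul_eq_mul, Int.cast_id, mul_comm]⟩
  have hgd : g.natAbs ∣ d := by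
    refine hgcd _ fun n hn => ?_
    have := Int.natAbs_dvd_natAbs.mpr (hgS n hn)
    simpa using this
  have hdgn : d ∣ g.natAbs := by
    have := Int.natAbs_dvd_natAbs.mpr hdg
    simpa using this
  have hgnd : g.natAbs = d := Nat.dvd_antisymm hgd hdgn
  have hdH : (d : ℤ) ∈ H := by
    rcases Int.natAbs_eq g with h | h
    · rw [← hgnd, ← h]; exact hgH
    · rw [← hgnd]
      have h2 : ((g.natAbs : ℤ)) = -g := by rw [h]; simp
      rw [h2]
      exact neg_mem hgH
  -- decompose d = p - q with p q ∈ S ∪ {0}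
  have hdec : ∀ x ∈ H, ∃ p q : ℕ, (p ∈ S ∨ p = 0) ∧ (q ∈ S ∨ q = 0) ∧ x = (p : ℤ) - q := by
    intro x hx
    induction hx using AddSubgroup.closure_induction with
    | mem y hy =>
      obtain ⟨n, hn, rfl⟩ := hy
      exact ⟨n, 0, Or.inl hn, Or.inr rfl, by simp⟩
    | zero => exact ⟨0, 0, Or.inr rfl, Or.inr rfl, by simp⟩
    | add a b _ _ ha hb =>
      obtain ⟨p, q, hp, hq, rfl⟩ := ha
      obtain ⟨p', q', hp', hq', rfl⟩ := hb
      refine ⟨p + p', q + q', ?_, ?_, by push_cast; ring⟩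
      · rcases hp with hp | hp
        · rcases hp' with hp' | hp'
          · exact Or.inl (hadd hp hp')
          · subst hp'; simpa using Or.inl hp
        · subst hp; simpa using hp'
      · rcases hq with hq | hq
        · rcases hq' with hq' | hq'
          · exact Or.inl (hadd hq hq')
          · subst hq'; simpa using Or.inl hq
        · subst hq; simpa using hq'
    | neg a _ ha =>
      obtain ⟨p, q, hp, hq, rfl⟩ := ha
      exact ⟨q, p, hq, hp, by ring⟩
  obtain ⟨p, q, hp, hq, hpq⟩ := hdec _ hdH
  have hpqn : p = d + q := by omega
  by_cases hq0 : q = 0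
  · -- d ∈ S
    subst hq0
    have hpd : p = d := by omega
    have hdS : d ∈ S := by
      rcases hp with h | h
      · rwa [hpd] at h
      · exact (by omega : False).elim
    exact ⟨1, le_refl 1, fun k hk => Sgp.mul_mem hadd hdS hk⟩
  · have hqS : q ∈ S := by
      rcases hq with h | h
      · exact h
      · exact absurd h hq0
    have hpS : p ∈ S := by
      rcases hp with h | h
      · exact h
      · exact (by omega : False).elim
    obtain ⟨c, hc⟩ := hdvd q hqS
    have hc1 : 1 ≤ c := by
      rcases Nat.eq_zero_or_pos c with h | h
      · subst h; omega
      · exact h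
    refine ⟨c * c + 1, by omega, fun k hk => ?_⟩
    set r := k % c with hr
    set qq := k / c with hqq
    have hrc : r < c := Nat.mod_lt _ (by omega)
    have hkeq : qq * c + r = k := by
      rw [hqq, hr, Nat.mul_comm]; exact Nat.div_add_mod k c
    have hqqc : c ≤ qq := by nlinarith [hkeq, hrc, hk]
    obtain ⟨m, hm⟩ : ∃ m, qq = r + m := ⟨qq - r, by omega⟩
    have hm1 : 1 ≤ m := by omega
    have hkd : k * d = m * q + r * p := by
      rw [← hkeq, hm, hc, hpqn, hc]; ring
    rcases Nat.eq_zero_or_pos r with hr0 | hr0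
    · rw [hkd, hr0]
      simpa using Sgp.mul_mem hadd hqS hm1
    · rw [hkd]
      exact hadd (Sgp.mul_mem hadd hqS hm1) (Sgp.mul_mem hadd hpS hr0)
  
end NumericalSemigroup


namespace DGraph

variable {V Ed : Type} {G : DGraph V Ed}

theorem not_isSink (hSC : G.StronglyConnected) (hedge : Nonempty Ed) (u : V) :
    ¬ G.IsSink u := by
  obtain ⟨e₀⟩ := hedge
  have h := hSC u (G.s e₀)
  rcases Relation.ReflTransGen.cases_head h with heq | ⟨b, hb, -⟩
  · intro hs; exact hs e₀ heq.symm
  · obtain ⟨e, he, -⟩ := hb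
    intro hs; exact hs e he

section TalLemmas

variable (hrf : G.RowFinite)

theorem gen_rel (u : V) (hu : ¬ G.IsSink u) (j : ℤ) :
    G.gen hrf u j = ∑ e ∈ (hrf u).toFinset, G.gen hrf (G.r e) (j + 1) := by
  unfold gen
  have hms := map_sum ((G.talCon hrf).mk')
    (fun e => Finsupp.single (G.r e, j + 1) (1 : ℕ)) ((hrf u).toFinset)
  exact ((AddCon.eq _).mpr (AddConGen.Rel.of _ _ ⟨u, j, hu, rfl, rfl⟩)).trans hms

theorem mle_gen_step {u : V} (hu : ¬ G.IsSink u) {e : Ed} (he : G.s e = u) (j : ℤ) :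
    MLe (G.gen hrf (G.r e) (j + 1)) (G.gen hrf u j) := by
  classical
  have hmem : e ∈ (hrf u).toFinset := by rw [Set.Finite.mem_toFinset]; exact he
  refine ⟨∑ f ∈ ((hrf u).toFinset).erase e, G.gen hrf (G.r f) (j + 1), ?_⟩
  rw [gen_rel hrf u hu j]
  exact Finset.add_sum_erase _ (fun f => G.gen hrf (G.r f) (j + 1)) hmem

theorem mle_gen_of_reach : ∀ {n : ℕ} {u w : V}, G.ReachLen n u w →
    (∀ x : V, ¬ G.IsSink x) → ∀ i : ℤ, MLe (G.gen hrf w (i + n)) (G.gen hrf u i) := by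
  intro n
  induction n with
  | zero =>
    rintro u w rfl hns i
    simpa using (MLe.rfl : MLe (G.gen hrf u i) (G.gen hrf u i))
  | succ n ih =>
    rintro u w ⟨e, he, h⟩ hns i
    have h1 := ih h hns (i + 1)
    have h2 := mle_gen_step hrf (hns u) he i
    have hc : i + ((n + 1 : ℕ) : ℤ) = i + 1 + (n : ℕ) := by push_cast; ring
    rw [hc]
    exact h1.trans h2

/-- The additive-monoid morphism sending a `V`-indexed multiset to the
corresponding sum of level-`j` generators. -/
noncomputable def lam (j : ℤ) : (V →₀ ℕ) →+ G.Tal hrf :=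
  Finsupp.liftAddHom fun w => multiplesHom _ (G.gen hrf w j)

theorem lam_single (j : ℤ) (w : V) (m : ℕ) :
    lam hrf j (Finsupp.single w m) = m • G.gen hrf w j := by
  rw [lam, Finsupp.liftAddHom_apply_single, multiplesHom_apply]

theorem lam_apply (j : ℤ) (g : V →₀ ℕ) :
    lam hrf j g = ∑ w ∈ g.support, g w • G.gen hrf w j := by
  rw [lam, Finsupp.liftAddHom_apply]
  rfl

/-- One-step expansion on multisets of vertices. -/
noncomputable def psi : (V →₀ ℕ) →+ (V →₀ ℕ) :=
  Finsupp.liftAddHom fun w =>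
    multiplesHom _ (∑ e ∈ (hrf w).toFinset, Finsupp.single (G.r e) 1)

theorem psi_single (w : V) (m : ℕ) :
    psi hrf (Finsupp.single w m) =
      m • ∑ e ∈ (hrf w).toFinset, Finsupp.single (G.r e) 1 := by
  rw [psi, Finsupp.liftAddHom_apply_single, multiplesHom_apply]

theorem lam_comp_psi (hns : ∀ x : V, ¬ G.IsSink x) (j : ℤ) :
    (lam hrf (j + 1)).comp (psi hrf) = lam hrf j := by
  refine Finsupp.addHom_ext fun w m => ?_
  rw [AddMonoidHom.comp_apply, psi_single, map_nsmul, map_sum, lam_single]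
  congr 1
  rw [gen_rel hrf w (hns w) j]
  refine Finset.sum_congr rfl fun e _ => ?_
  rw [lam_single, one_smul]

theorem psi_support {g : V →₀ ℕ} {w' : V} (hw' : w' ∈ (psi hrf g).support) :
    ∃ w ∈ g.support, ∃ e : Ed, G.s e = w ∧ G.r e = w' := by
  classical
  rw [psi, Finsupp.liftAddHom_apply] at hw'
  have := Finsupp.support_sum hw'
  rw [Finset.mem_biUnion] at this
  obtain ⟨w, hw, hmem⟩ := this
  rw [multiplesHom_apply] at hmem
  have hmem2 : w' ∈ (∑ e ∈ (hrf w).toFinset, Finsupp.single (G.r e) 1).support := by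
    have hsub := Finsupp.support_smul (b := g w)
      (g := ∑ e ∈ (hrf w).toFinset, Finsupp.single (G.r e) 1)
    exact hsub hmem
  obtain ⟨e, he, hemem⟩ := Finsupp.mem_support_finset_sum w' hmem2
  rw [Finsupp.mem_support_iff, Finsupp.single_apply_ne_zero] at hemem
  have hse : G.s e = w := (Set.Finite.mem_toFinset (hrf w)).mp he
  exact ⟨w, hw, e, hse, hemem.1.symm⟩

theorem exists_expansion (hns : ∀ x : V, ¬ G.IsSink x) (u : V) (i : ℤ) (n : ℕ) :
    ∃ g : V →₀ ℕ, G.gen hrf u i = lam hrf (i + n) g ∧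
      ∀ w ∈ g.support, G.ReachLen n u w := by
  induction n with
  | zero =>
    refine ⟨Finsupp.single u 1, ?_, ?_⟩
    · rw [lam_single]
      simp
    · intro w hw
      have : w = u := Finset.mem_singleton.mp (Finsupp.support_single_subset hw)
      subst this; rfl
  | succ n ih =>
    obtain ⟨g, hg, hsupp⟩ := ih
    refine ⟨psi hrf g, ?_, ?_⟩
    · have hc : i + ((n + 1 : ℕ) : ℤ) = (i + (n : ℕ)) + 1 := by push_cast; ring
      rw [hc]
      calc G.gen hrf u i = lam hrf (i + (n : ℕ)) g := hg
        _ = ((lam hrf (i + (n : ℕ) + 1)).comp (psi hrf)) g := by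
            rw [lam_comp_psi hrf hns (i + (n : ℕ))]
        _ = lam hrf (i + (n : ℕ) + 1) (psi hrf g) := rfl
    · intro w' hw'
      obtain ⟨w, hw, e, he, hre⟩ := psi_support hrf hw'
      have h1 : G.ReachLen n u w := hsupp w hw
      have h2 : G.ReachLen 1 w w' := ⟨e, he, hre⟩
      exact ReachLen.trans h1 h2

end TalLemmas

end DGraph


namespace DGraph

variable {V Ed : Type} {G : DGraph V Ed}

section Phi

variable (hrf : G.RowFinite) {A : Type} [DecidableEq A]

/-- The set of "colours" of the support of a free-monoid element. -/
def phi0 (c : V × ℤ → A) (f : (V × ℤ) →₀ ℕ) : Finset A := f.support.image c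

theorem phi0_add (c : V × ℤ → A) (f g : (V × ℤ) →₀ ℕ) :
    phi0 c (f + g) = phi0 c f ∪ phi0 c g := by
  classical
  unfold phi0
  rw [← Finset.image_union]
  congr 1
  ext p
  simp only [Finsupp.mem_support_iff, Finsupp.add_apply, Finset.mem_union]
  omega

theorem phi0_single (c : V × ℤ → A) (p : V × ℤ) :
    phi0 c (Finsupp.single p 1) = {c p} := by
  unfold phi0
  rw [Finsupp.support_single_ne_zero _ one_ne_zero]
  simp

theorem talCon_phi0 (c : V × ℤ → A)
    (hc : ∀ (e : Ed) (j : ℤ), c (G.r e, j + 1) = c (G.s e, j))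
    (hns : ∀ x : V, ¬ G.IsSink x) :
    ∀ f g, G.talCon hrf f g → phi0 c f = phi0 c g := by
  intro f g hfg
  let C : AddCon ((V × ℤ) →₀ ℕ) :=
    { r := fun a b => phi0 c a = phi0 c b
      iseqv := ⟨fun _ => rfl, Eq.symm, Eq.trans⟩
      add' := by
        intro a b a' b' h1 h2
        show phi0 c (a + a') = phi0 c (b + b')
        rw [phi0_add, phi0_add,
          show phi0 c a = phi0 c b from h1,
          show phi0 c a' = phi0 c b' from h2] }
  have hle : G.talCon hrf ≤ C := by
    unfold talCon
    apply AddCon.addConGen_le.mpr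
    rintro a b ⟨u, i, hu, rfl, rfl⟩
    show phi0 c _ = phi0 c _
    rw [phi0_single]
    apply Finset.Subset.antisymm
    · intro x hx
      rw [Finset.mem_singleton] at hx
      subst hx
      have hex : ∃ e : Ed, G.s e = u := by
        by_contra hno
        push_neg at hno
        exact hns u hno
      obtain ⟨e₀, he₀⟩ := hex
      have he₀m : e₀ ∈ (hrf u).toFinset := (Set.Finite.mem_toFinset (hrf u)).mpr he₀
      refine Finset.mem_image.mpr ⟨(G.r e₀, i + 1), ?_, by rw [hc e₀ i, he₀]⟩
      rw [Finsupp.mem_support_iff, Finsupp.finset_sum_apply]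
      intro h0
      have := Finset.sum_eq_zero_iff.mp h0 e₀ he₀m
      simp [Finsupp.single_apply] at this
    · intro x hx
      obtain ⟨p, hp, rfl⟩ := Finset.mem_image.mp hx
      obtain ⟨e, he, hpe⟩ := Finsupp.mem_support_finset_sum p hp
      have hse : G.s e = u := (Set.Finite.mem_toFinset (hrf u)).mp he
      rw [Finsupp.mem_support_iff, Finsupp.single_apply_ne_zero] at hpe
      rw [hpe.1, Finset.mem_singleton, hc e i, hse]
  exact hle hfg

variable (c : V × ℤ → A)
    (hc : ∀ (e : Ed) (j : ℤ), c (G.r e, j + 1) = c (G.s e, j))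
    (hns : ∀ x : V, ¬ G.IsSink x)

/-- `phi0` descends to the talented monoid. -/
noncomputable def phiT (x : G.Tal hrf) : Finset A :=
  AddCon.liftOn x (phi0 c) (talCon_phi0 hrf c hc hns)

theorem phiT_mk (f : (V × ℤ) →₀ ℕ) :
    phiT hrf c hc hns ((G.talCon hrf).mk' f) = phi0 c f := rfl

theorem phiT_gen (w : V) (j : ℤ) :
    phiT hrf c hc hns (G.gen hrf w j) = {c (w, j)} := phi0_single c (w, j)

theorem phiT_add (x y : G.Tal hrf) :
    phiT hrf c hc hns (x + y) = phiT hrf c hc hns x ∪ phiT hrf c hc hns y := by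
  induction x using AddCon.induction_on with
  | H a =>
    induction y using AddCon.induction_on with
    | H b => exact phi0_add c a b

theorem phiT_zero : phiT hrf c hc hns (0 : G.Tal hrf) = ∅ := by
  have : (0 : G.Tal hrf) = (G.talCon hrf).mk' 0 := rfl
  rw [this, phiT_mk]
  simp [phi0]

theorem eq_zero_of_phiT {x : G.Tal hrf} (hx : phiT hrf c hc hns x = ∅) : x = 0 := by
  induction x using AddCon.induction_on with
  | H f =>
    have h1 : phi0 c f = ∅ := hx
    unfold phi0 at h1
    rw [Finset.image_eq_empty, Finsupp.support_eq_empty] at h1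
    rw [h1]
    rfl

theorem phiT_mle {x y : G.Tal hrf} (h : MLe x y) :
    phiT hrf c hc hns x ⊆ phiT hrf c hc hns y := by
  obtain ⟨z, hz⟩ := h
  rw [← hz, phiT_add]
  exact Finset.subset_union_left

theorem phiT_nsmul (n : ℕ) (x : G.Tal hrf) :
    phiT hrf c hc hns (n • x) ⊆ phiT hrf c hc hns x := by
  induction n with
  | zero => rw [zero_smul, phiT_zero]; exact Finset.empty_subset _
  | succ n ih =>
    rw [succ_nsmul, phiT_add]
    exact Finset.union_subset ih (le_refl _)

end Phi

end DGraph

/-- Let `E` be a finite strongly connected graph with at least one edge,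
`v` a vertex and `d ≥ 1` its period.  Then in `T_E`:
(1) `[v] ∩ ⁱ[v] = {0}` for all `0 < i < d`;  (2) `[v] = ᵈ[v]`;  (3) `[v]` is a simple
order ideal.  (Here `ⁱ[v] = [v(i)]`.) -/
theorem statement9 {V Ed : Type} [Fintype V] [Fintype Ed] (G : DGraph V Ed)
    (hSC : G.StronglyConnected) (hedge : Nonempty Ed)
    (v : V) (d : ℕ) (hd : 1 ≤ d) (hper : G.IsPeriodOf d v) :
    (∀ i : ℕ, 0 < i → i < d →
      orderIdealGen (G.gen G.rowFinite_of_finite v 0) ∩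
          orderIdealGen (G.gen G.rowFinite_of_finite v (i : ℤ)) = {0}) ∧
    orderIdealGen (G.gen G.rowFinite_of_finite v 0) =
        orderIdealGen (G.gen G.rowFinite_of_finite v (d : ℤ)) ∧
    IsSimpleOrderIdeal (orderIdealGen (G.gen G.rowFinite_of_finite v 0)) := by
  classical
  haveI : NeZero d := ⟨by omega⟩
  set hrf := G.rowFinite_of_finite with hhrf
  have hns : ∀ u : V, ¬ G.IsSink u := DGraph.not_isSink hSC hedge
  -- closed path lengths at v
  set S := G.closedLens v with hSdef
  have hSadd : ∀ {p q : ℕ}, p ∈ S → q ∈ S → p + q ∈ S := by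
    intro p q hp hq
    rw [hSdef, DGraph.mem_closedLens_iff] at hp hq ⊢
    exact ⟨by omega, DGraph.ReachLen.trans hp.2 hq.2⟩
  have hdvdS : ∀ n ∈ S, d ∣ n := hper.1
  obtain ⟨K, hK1, hKS⟩ :=
    numerical_semigroup S (fun hp hq => hSadd hp hq) d hd hdvdS hper.2
  -- the distance-residue function
  have haa : ∀ w : V, ∃ n : ℕ, G.ReachLen n v w := fun w =>
    DGraph.flowsTo_reachLen (hSC v w)
  set aa : V → ℕ := fun w => (haa w).choose with haadef
  have haspec : ∀ w, G.ReachLen (aa w) v w := fun w => (haa w).choose_spec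
  have hzero : ∀ m : ℕ, G.ReachLen m v v → (m : ZMod d) = 0 := by
    intro m hm
    rcases Nat.eq_zero_or_pos m with h | h
    · subst h; simp
    · have hmS : m ∈ S := (DGraph.mem_closedLens_iff).mpr ⟨by omega, hm⟩
      rw [ZMod.natCast_eq_zero_iff]
      exact hdvdS m hmS
  have hcast : ∀ (w : V) (n : ℕ), G.ReachLen n v w →
      ((n : ZMod d)) = (aa w : ZMod d) := by
    intro w n hn
    obtain ⟨b, hb⟩ := DGraph.flowsTo_reachLen (hSC w v)
    have h1 : ((n + b : ℕ) : ZMod d) = 0 := hzero _ (DGraph.ReachLen.trans hn hb)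
    have h2 : ((aa w + b : ℕ) : ZMod d) = 0 :=
      hzero _ (DGraph.ReachLen.trans (haspec w) hb)
    push_cast at h1 h2
    linear_combination h1 - h2
  have haav : (aa v : ZMod d) = 0 := (hcast v 0 rfl).symm.trans (by simp)
  have hbig : ∀ (w : V) (t : ℕ), ((t : ZMod d)) = (aa w : ZMod d) →
      aa w + K * d ≤ t → G.ReachLen t v w := by
    intro w t hcasteq hle
    have hmod : t ≡ aa w [MOD d] := (ZMod.natCast_eq_natCast_iff _ _ _).mp hcasteq
    have hdvd2 : d ∣ t - aa w := (Nat.modEq_iff_dvd' (by omega)).mp hmod.symm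
    obtain ⟨k, hk⟩ := hdvd2
    have htge : aa w ≤ t := le_trans (Nat.le_add_right _ _) hle
    have ht' : t = d * k + aa w := (Nat.sub_eq_iff_eq_add htge).mp hk
    have hkK : K ≤ k := by
      have hle' : aa w + d * K ≤ t := by rwa [Nat.mul_comm K d] at hle
      have h2 : d * K ≤ d * k := by linarith
      exact Nat.le_of_mul_le_mul_left h2 (by omega)
    have hkd : k * d ∈ S := hKS k hkK
    have h1 : G.ReachLen (k * d) v v := ((DGraph.mem_closedLens_iff).mp hkd).2
    have h2 := DGraph.ReachLen.trans h1 (haspec w)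
    have heq : k * d + aa w = t := by rw [Nat.mul_comm]; exact ht'.symm
    rwa [heq] at h2
  set A := (Finset.univ : Finset V).sup aa with hA
  have haaA : ∀ w, aa w ≤ A := fun w => Finset.le_sup (Finset.mem_univ w)
  -- The key "going down" lemma
  have LL : ∀ i j : ℤ, (d : ℤ) ∣ (j - i) →
      ∃ n : ℕ, MLe (G.gen hrf v j) (n • G.gen hrf v i) := by
    intro i j hdvd
    set s : ℕ := A + K * d + 1 + (i - j).toNat with hs
    obtain ⟨g, hg, hsupp⟩ := DGraph.exists_expansion hrf hns v j s
    set t : ℕ := (j + (s : ℤ) - i).toNat with ht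
    have htZ : (t : ℤ) = j + (s : ℤ) - i := by
      rw [ht, Int.toNat_of_nonneg]
      omega
    have hkey : ∀ w ∈ g.support, MLe (G.gen hrf w (j + (s : ℤ))) (G.gen hrf v i) := by
      intro w hw
      have hr : G.ReachLen s v w := hsupp w hw
      have hres : ((s : ZMod d)) = (aa w : ZMod d) := hcast w s hr
      have hji : ((j - i : ℤ) : ZMod d) = 0 := by
        rw [ZMod.intCast_zmod_eq_zero_iff_dvd]; exact hdvd
      have htcast : ((t : ZMod d)) = (aa w : ZMod d) := by
        have h3 : ((t : ℕ) : ZMod d) = (((t : ℤ) : ZMod d)) := by push_cast; ring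
        rw [h3, htZ]
        push_cast at hji hres ⊢
        linear_combination hji + hres
      have hsize : aa w + K * d ≤ t := by
        have := haaA w
        omega
      have hreach : G.ReachLen t v w := hbig w t htcast hsize
      have hmle := DGraph.mle_gen_of_reach hrf hreach hns i
      have heq : i + (t : ℤ) = j + (s : ℤ) := by omega
      rwa [heq] at hmle
    refine ⟨∑ w ∈ g.support, g w, ?_⟩
    rw [hg, DGraph.lam_apply]
    have h1 : MLe (∑ w ∈ g.support, g w • G.gen hrf w (j + (s : ℤ)))
        (∑ w ∈ g.support, g w • G.gen hrf v i) :=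
      MLe.sum _ _ _ (fun w hw => MLe.nsmul (g w) (hkey w hw))
    rwa [← Finset.sum_smul] at h1
  -- the colouring
  set cfun : V × ℤ → ZMod d := fun p => (aa p.1 : ZMod d) - ((p.2 : ℤ) : ZMod d)
    with hcfun
  have hcomp : ∀ (e : Ed) (j : ℤ), cfun (G.r e, j + 1) = cfun (G.s e, j) := by
    intro e j
    have h1 : G.ReachLen (aa (G.s e) + 1) v (G.r e) :=
      DGraph.ReachLen.trans (haspec (G.s e)) ⟨e, rfl, rfl⟩
    have h2 := hcast (G.r e) _ h1
    show (aa (G.r e) : ZMod d) - (((j + 1 : ℤ)) : ZMod d) =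
      (aa (G.s e) : ZMod d) - ((j : ℤ) : ZMod d)
    push_cast at h2 ⊢
    linear_combination -h2
  have hgen_ne : ∀ (w : V) (j : ℤ), G.gen hrf w j ≠ 0 := by
    intro w j h
    have h1 := DGraph.phiT_gen hrf cfun hcomp hns w j
    rw [h, DGraph.phiT_zero] at h1
    exact absurd h1.symm (Finset.singleton_ne_empty _)
  have hsubPhi : ∀ (x : G.Tal hrf) (w : V) (j : ℤ) (n : ℕ), MLe x (n • G.gen hrf w j) →
      DGraph.phiT hrf cfun hcomp hns x ⊆ {cfun (w, j)} := by
    intro x w j n hx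
    refine (DGraph.phiT_mle hrf cfun hcomp hns hx).trans ?_
    refine (DGraph.phiT_nsmul hrf cfun hcomp hns n _).trans ?_
    rw [DGraph.phiT_gen]
  refine ⟨?_, ?_, ?_⟩
  -- Part (1)
  · intro i hi0 hid
    ext x
    simp only [Set.mem_inter_iff, Set.mem_singleton_iff, orderIdealGen,
      Set.mem_setOf_eq]
    constructor
    · rintro ⟨⟨n, hn⟩, ⟨m, hm⟩⟩
      have h1 := hsubPhi x v 0 n hn
      have h2 := hsubPhi x v (i : ℤ) m hm
      have hne : cfun (v, 0) ≠ cfun (v, (i : ℤ)) := by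
        intro heq
        rw [hcfun] at heq
        simp only at heq
        have hieq : ((i : ℕ) : ZMod d) = 0 := by
          push_cast at heq ⊢
          linear_combination heq
        rw [ZMod.natCast_eq_zero_iff] at hieq
        have := Nat.le_of_dvd hi0 hieq
        omega
      have hempty : DGraph.phiT hrf cfun hcomp hns x = ∅ := by
        rw [Finset.eq_empty_iff_forall_notMem]
        intro q hq
        have q1 := Finset.mem_singleton.mp (h1 hq)
        have q2 := Finset.mem_singleton.mp (h2 hq)
        exact hne (q1 ▸ q2)
      exact DGraph.eq_zero_of_phiT hrf cfun hcomp hns hempty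
    · rintro rfl
      exact ⟨⟨0, MLe.zero_le _⟩, ⟨0, MLe.zero_le _⟩⟩
  -- Part (2)
  · obtain ⟨n1, h1⟩ := LL (d : ℤ) 0 ⟨-1, by ring⟩
    obtain ⟨n2, h2⟩ := LL 0 (d : ℤ) ⟨1, by ring⟩
    ext x
    simp only [orderIdealGen, Set.mem_setOf_eq]
    constructor
    · rintro ⟨n, hn⟩
      refine ⟨n * n1, hn.trans ?_⟩
      rw [mul_smul]
      exact MLe.nsmul n h1
    · rintro ⟨n, hn⟩
      refine ⟨n * n2, hn.trans ?_⟩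
      rw [mul_smul]
      exact MLe.nsmul n h2
  -- Part (3)
  · have hIideal := isOrderIdeal_orderIdealGen (G.gen hrf v 0)
    refine ⟨hIideal, ?_, ?_⟩
    · intro hI
      have hmem : G.gen hrf v 0 ∈ orderIdealGen (G.gen hrf v 0) :=
        ⟨1, by rw [one_smul]; exact MLe.rfl⟩
      rw [hI] at hmem
      exact hgen_ne v 0 hmem
    · intro J hJ hJI
      by_cases hJ0 : J = {0}
      · exact Or.inl hJ0
      refine Or.inr ?_
      have hx : ∃ x ∈ J, x ≠ 0 := by
        by_contra hno
        push_neg at hno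
        apply hJ0
        apply Set.Subset.antisymm
        · intro y hy; exact hno y hy
        · intro y hy
          rw [Set.mem_singleton_iff] at hy
          subst hy
          exact hJ.zero_mem
      obtain ⟨x, hxJ, hx0⟩ := hx
      obtain ⟨f, hf⟩ := AddCon.mk'_surjective x
      have hf0 : f ≠ 0 := by
        intro h
        apply hx0
        rw [← hf, h]
        rfl
      obtain ⟨p, hp⟩ := Finsupp.support_nonempty_iff.mpr hf0
      obtain ⟨w, jj⟩ := p
      have hfp1 : 1 ≤ f (w, jj) := by
        rw [Finsupp.mem_support_iff] at hp
        omega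
      have hgle : MLe (G.gen hrf w jj) x := by
        have hle1 : MLe (Finsupp.single ((w, jj) : V × ℤ) (1 : ℕ)) f := by
          refine ⟨Finsupp.single (w, jj) (f (w, jj) - 1) + f.erase (w, jj), ?_⟩
          rw [← add_assoc, ← Finsupp.single_add]
          rw [show 1 + (f (w, jj) - 1) = f (w, jj) by omega]
          exact Finsupp.single_add_erase _ _
        have := hle1.map ((G.talCon hrf).mk')
        rwa [hf] at this
      have hgJ : G.gen hrf w jj ∈ J := hJ.mem_of_le hxJ hgle
      obtain ⟨n, hn⟩ := hJI hxJ
      have hgle2 : MLe (G.gen hrf w jj) (n • G.gen hrf v 0) := hgle.trans hn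
      have hres : cfun (w, jj) = cfun (v, 0) := by
        have hsub := hsubPhi (G.gen hrf w jj) v 0 n hgle2
        have hmem := hsub (by
          rw [DGraph.phiT_gen]
          exact Finset.mem_singleton_self _)
        rwa [Finset.mem_singleton] at hmem
      obtain ⟨b, hb⟩ := DGraph.flowsTo_reachLen (hSC w v)
      set k : ℕ := K + (jj + b).natAbs + 1 with hk
      have hkd : k * d ∈ S := hKS k (by omega)
      have hreach : G.ReachLen (b + k * d) w v :=
        DGraph.ReachLen.trans hb ((DGraph.mem_closedLens_iff).mp hkd).2
      have hvle : MLe (G.gen hrf v (jj + ((b + k * d : ℕ) : ℤ))) (G.gen hrf w jj) :=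
        DGraph.mle_gen_of_reach hrf hreach hns jj
      have hjb : (d : ℤ) ∣ (jj + b) := by
        have hcj : ((jj : ℤ) : ZMod d) = (aa w : ZMod d) := by
          rw [hcfun] at hres
          simp only at hres
          push_cast at hres haav ⊢
          linear_combination -hres - haav
        have hwb : ((aa w + b : ℕ) : ZMod d) = 0 :=
          hzero _ (DGraph.ReachLen.trans (haspec w) hb)
        have : ((jj + b : ℤ) : ZMod d) = 0 := by
          push_cast at hwb ⊢
          rw [hcj]
          linear_combination hwb
        rwa [ZMod.intCast_zmod_eq_zero_iff_dvd] at this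
      obtain ⟨n', hn'⟩ := LL (jj + ((b + k * d : ℕ) : ℤ)) 0 (by
        have heq : (0 : ℤ) - (jj + ((b + k * d : ℕ) : ℤ)) = -((jj + b) + (k * d : ℕ)) := by
          push_cast; ring
        rw [heq]
        refine dvd_neg.mpr (dvd_add hjb ⟨(k : ℤ), by push_cast; ring⟩))
      -- gen v 0 ≤ n' • gen v (jj + b + kd) ≤ n' • gen w jj
      have hv0 : MLe (G.gen hrf v 0) (n' • G.gen hrf w jj) :=
        hn'.trans (MLe.nsmul n' hvle)
      apply Set.Subset.antisymm hJI
      intro y hy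
      obtain ⟨m, hm⟩ := hy
      have hy2 : MLe y ((m * n') • G.gen hrf w jj) := by
        refine hm.trans ?_
        rw [mul_smul]
        exact MLe.nsmul m hv0
      exact hJ.mem_of_le (hJ.nsmul_mem hgJ (m * n')) hy2
end
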